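/- arXiv:2412.19008 — 3 statements merged into one kernel-verified Lean document; each statement's English description precedes it below -/
import Mathlib

section
/- Let F, G : C → D be exact functors between abelian categories and η : F → G a natural transformation. Define H(X) = im(η_X : F(X) → G(X)). Then for every epimorphism X₁ ↠ X₂ in C, the induced map H(X₁) → H(X₂) is an epimorphism, and for every monomorphism X₁' ↪ X₂' in C, the induced map H(X₁') → H(X₂') is a monomorphism. -/
open CategoryTheory CategoryTheory.Limits

/-- let `F, G : C ⥤ D` be exact functors between abelian categories and
`η : F ⟶ G` a natural transformation; let `H(X) = im(η_X)`.  Then `H` sends epimorphisms to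
epimorphisms and monomorphisms to monomorphisms. -/
theorem image_of_natTrans_preserves_epi_mono
    {C D : Type*} [Category C] [Category D] [Abelian C] [Abelian D]
    (F G : C ⥤ D) [F.Additive] [G.Additive]
    [PreservesFiniteLimits F] [PreservesFiniteColimits F]
    [PreservesFiniteLimits G] [PreservesFiniteColimits G]
    (η : F ⟶ G) :
    (∀ (X₁ X₂ : C) (f : X₁ ⟶ X₂), Epi f →
      Epi (image.map (Arrow.homMk (u := F.map f) (v := G.map f) (η.naturality f) :
        Arrow.mk (η.app X₁) ⟶ Arrow.mk (η.app X₂)))) ∧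
    (∀ (X₁ X₂ : C) (f : X₁ ⟶ X₂), Mono f →
      Mono (image.map (Arrow.homMk (u := F.map f) (v := G.map f) (η.naturality f) :
        Arrow.mk (η.app X₁) ⟶ Arrow.mk (η.app X₂)))) := by
  constructor
  · intro X₁ X₂ f hf
    have h := image.factor_map (Arrow.homMk (u := F.map f) (v := G.map f) (η.naturality f) :
        Arrow.mk (η.app X₁) ⟶ Arrow.mk (η.app X₂))
    haveI : Epi (F.map f) := F.map_epi f
    have : Epi (factorThruImage (η.app X₁) ≫ image.map (Arrow.homMk (u := F.map f)
        (v := G.map f) (η.naturality f) : Arrow.mk (η.app X₁) ⟶ Arrow.mk (η.app X₂))) := by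
      simp only [Arrow.mk_hom, Arrow.homMk_left] at h
      rw [h]; exact epi_comp _ _
    exact epi_of_epi (factorThruImage (η.app X₁)) _
  · intro X₁ X₂ f hf
    have h := image.map_ι (Arrow.homMk (u := F.map f) (v := G.map f) (η.naturality f) :
        Arrow.mk (η.app X₁) ⟶ Arrow.mk (η.app X₂))
    haveI : Mono (G.map f) := G.map_mono f
    have : Mono (image.map (Arrow.homMk (u := F.map f)
        (v := G.map f) (η.naturality f) : Arrow.mk (η.app X₁) ⟶ Arrow.mk (η.app X₂)) ≫
        image.ι (η.app X₂)) := by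
      simp only [Arrow.mk_hom, Arrow.homMk_right] at h
      rw [h]; exact mono_comp _ _
    exact mono_of_mono _ (image.ι (η.app X₂))
end

section
/- Let F, G : C → D be exact functors between abelian categories, η : F → G a natural transformation, H = im(η) the image functor, and J = ker(F → H). If N^{−1} → N^0 → N^1 is an exact sequence in C such that the induced map J(N^0) → J(N^1) is an epimorphism, then the induced sequence H(N^{−1}) → H(N^0) → H(N^1) is exact. -/
open CategoryTheory CategoryTheory.Limits

variable {C D : Type*} [Category C] [Category D] [Abelian C] [Abelian D]
variable (F G : C ⥤ D)

/-- The naturality square of `η` at `f`, as a morphism of arrows. -/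
def natSq (η : F ⟶ G) {X Y : C} (f : X ⟶ Y) :
    Arrow.mk (η.app X) ⟶ Arrow.mk (η.app Y) :=
  Arrow.homMk (u := F.map f) (v := G.map f) (η.naturality f)

/-- The map induced by `f` on the image functor `H(X) = im(η_X)`. -/
noncomputable def Hmap (η : F ⟶ G) {X Y : C} (f : X ⟶ Y) :
    image (η.app X) ⟶ image (η.app Y) :=
  image.map (natSq F G η f)

/-- The map induced by `f` on `J(X) = ker(F(X) → H(X))`. -/
noncomputable def Jmap (η : F ⟶ G) {X Y : C} (f : X ⟶ Y) :
    kernel (factorThruImage (η.app X)) ⟶ kernel (factorThruImage (η.app Y)) :=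
  kernel.map (factorThruImage (η.app X)) (factorThruImage (η.app Y))
    (F.map f) (Hmap F G η f) (by simpa [Hmap, natSq] using image.factor_map (natSq F G η f))

open Pseudoelement in
/-- let `F, G : C ⥤ D` be exact functors between abelian categories,
`η : F ⟶ G`, `H = im η`, `J = ker (F → H)`.  If `N⁻¹ → N⁰ → N¹` is exact and
`J(N⁰) → J(N¹)` is an epimorphism, then `H(N⁻¹) → H(N⁰) → H(N¹)` is exact. -/
theorem image_functor_exact_of_J_epi
    [F.Additive] [G.Additive]
    [PreservesFiniteLimits F] [PreservesFiniteColimits F]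
    [PreservesFiniteLimits G] [PreservesFiniteColimits G]
    (η : F ⟶ G) (S : ShortComplex C) (hS : S.Exact)
    (hJ : Epi (Jmap F G η S.g)) :
    ∃ w : Hmap F G η S.f ≫ Hmap F G η S.g = 0,
      (ShortComplex.mk (Hmap F G η S.f) (Hmap F G η S.g) w).Exact := by

  classical
  -- basic commutation lemmas
  have hcomm : ∀ {X Y : C} (f : X ⟶ Y),
      factorThruImage (η.app X) ≫ Hmap F G η f =
        F.map f ≫ factorThruImage (η.app Y) := fun {X Y} f => by
    simpa [Hmap, natSq] using image.factor_map (natSq F G η f)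
  have hι : ∀ {X Y : C} (f : X ⟶ Y),
      Hmap F G η f ≫ image.ι (η.app Y) = image.ι (η.app X) ≫ G.map f := fun {X Y} f => by
    simpa [Hmap, natSq] using image.map_ι (natSq F G η f)
  have w : Hmap F G η S.f ≫ Hmap F G η S.g = 0 := by
    rw [← cancel_epi (factorThruImage (η.app S.X₁)),
        ← cancel_mono (image.ι (η.app S.X₃))]
    rw [Category.assoc, Category.assoc, hι S.g, ← Category.assoc (Hmap F G η S.f),
        hι S.f]
    simp [← G.map_comp, S.zero]
  refine ⟨w, ?_⟩
  have hFH : F.PreservesHomology :=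
    { preservesKernels := fun f => inferInstance
      preservesCokernels := fun f => inferInstance }
  have hFS : (S.map F).Exact := hS.map F
  -- the kernel short complex at X₃ is exact
  have hker : (ShortComplex.mk (kernel.ι (factorThruImage (η.app S.X₃)))
      (factorThruImage (η.app S.X₃)) (kernel.condition _)).Exact :=
    ShortComplex.exact_of_f_is_kernel _ (kernelIsKernel _)
  apply Abelian.Pseudoelement.exact_of_pseudo_exact
  intro b hb
  obtain ⟨x, hx⟩ :=
    Abelian.Pseudoelement.pseudo_surjective_of_epi (factorThruImage (η.app S.X₂)) b
  have h1 : (factorThruImage (η.app S.X₃)) ((F.map S.g) x) = 0 := by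
    rw [← Abelian.Pseudoelement.comp_apply, ← hcomm S.g,
      Abelian.Pseudoelement.comp_apply, hx, hb]
  obtain ⟨y, hy⟩ := Abelian.Pseudoelement.pseudo_exact_of_exact hker _ h1
  obtain ⟨z, hz⟩ := Abelian.Pseudoelement.pseudo_surjective_of_epi (Jmap F G η S.g) y
  have hJι : Jmap F G η S.g ≫ kernel.ι (factorThruImage (η.app S.X₃)) =
      kernel.ι (factorThruImage (η.app S.X₂)) ≫ F.map S.g := by
    simp [Jmap]
  have h2 : (F.map S.g) x = (F.map S.g) ((kernel.ι (factorThruImage (η.app S.X₂))) z) := by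
    rw [← Abelian.Pseudoelement.comp_apply, ← hJι,
      Abelian.Pseudoelement.comp_apply, hz, hy]
  obtain ⟨r, hr0, hr⟩ := Abelian.Pseudoelement.sub_of_eq_image (F.map S.g) x _ h2
  have hpz : (factorThruImage (η.app S.X₂)) ((kernel.ι (factorThruImage (η.app S.X₂))) z) = 0 := by
    rw [← Abelian.Pseudoelement.comp_apply, kernel.condition]
    exact Abelian.Pseudoelement.zero_apply _ _
  have hrx : (factorThruImage (η.app S.X₂)) r = (factorThruImage (η.app S.X₂)) x :=
    hr _ _ hpz
  obtain ⟨a', ha'⟩ : ∃ a' : Abelian.Pseudoelement (F.obj S.X₁), (F.map S.f) a' = r :=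
    Abelian.Pseudoelement.pseudo_exact_of_exact hFS r hr0
  refine ⟨(factorThruImage (η.app S.X₁)) a', ?_⟩
  rw [← Abelian.Pseudoelement.comp_apply, hcomm S.f,
    Abelian.Pseudoelement.comp_apply]
  exact ha'.symm ▸ hrx.trans hx
end

section
/- Let g be a Lie algebra over field k of characteristic 0 with parabolic data as above (p⁻ a subalgebra with ideal u⁻ and quotient l, u⁺ a complementary subalgebra with g = u⁺ ⊕ p⁻). Then for every l-module N, the u⁺-invariants of the coinduced module satisfy Hom_{U(u⁺)}(k, Hom_{U(p⁻)}(U(g), N)) ≅ N naturally in N, i.e., Res^! ∘ Ind_* = id. -/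
open UniversalEnvelopingAlgebra TensorProduct

attribute [local instance 100] LieRing.ofAssociativeRing

section

variable (k : Type*) [Field k] [CharZero k]
variable (L : Type*) [LieRing L] [LieAlgebra k L]
variable (p : LieSubalgebra k L)
variable (lQ : Type*) [LieRing lQ] [LieAlgebra k lQ]
variable (π : p →ₗ⁅k⁆ lQ)
variable (N : Type*) [AddCommGroup N] [Module k N]
  [Module (UniversalEnvelopingAlgebra k lQ) N]
  [IsScalarTower k (UniversalEnvelopingAlgebra k lQ) N]

/-- The algebra map `U(q) → U(g)` induced by the inclusion of a subalgebra `q ⊆ g`. -/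
noncomputable def subUEA (q : LieSubalgebra k L) :
    UniversalEnvelopingAlgebra k q →ₐ[k] UniversalEnvelopingAlgebra k L :=
  UniversalEnvelopingAlgebra.lift k ((UniversalEnvelopingAlgebra.ι k).comp q.incl)

/-- The algebra map `U(p) → U(g)` induced by the inclusion `p ⊆ g`. -/
noncomputable def inclUEA : UniversalEnvelopingAlgebra k p →ₐ[k] UniversalEnvelopingAlgebra k L :=
  subUEA k L p

/-- The algebra map `U(p) → U(l)` induced by the projection `π : p ↠ l`. -/
noncomputable def projUEA : UniversalEnvelopingAlgebra k p →ₐ[k] UniversalEnvelopingAlgebra k lQ :=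
  UniversalEnvelopingAlgebra.lift k ((UniversalEnvelopingAlgebra.ι k).comp π)

/-- The coinduced module `Hom_{U(p)}(U(g), N)` as a `k`-subspace of `Hom_k(U(g), N)`:
`k`-linear maps `f` with `f((φ x) * a) = (ψ x) • f a`, where `U(g)` is a left `U(p)`-module
via left multiplication through `φ : U(p) → U(g)`, and `N` is a `U(p)`-module via
`ψ : U(p) → U(l)`. -/
noncomputable def coindCarrier :
    Submodule k (UniversalEnvelopingAlgebra k L →ₗ[k] N) where
  carrier := {f | ∀ (x : UniversalEnvelopingAlgebra k p) (a : UniversalEnvelopingAlgebra k L),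
    f (inclUEA k L p x * a) = projUEA k L p lQ π x • f a}
  add_mem' := by
    intro f g hf hg x a
    simp [hf x a, hg x a]
  zero_mem' := by intro x a; simp
  smul_mem' := by
    intro c f hf x a
    simp only [LinearMap.smul_apply, hf x a]
    rw [smul_comm]

/-- The coinduced module `Coind N = Hom_{U(p)}(U(g), N)`. -/
noncomputable abbrev CoindMod := ↥(coindCarrier k L p lQ π N)

noncomputable instance : SMul (UniversalEnvelopingAlgebra k L) (CoindMod k L p lQ π N) :=
  ⟨fun s f => ⟨f.1 ∘ₗ LinearMap.mulRight k s, fun x a => by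
    simpa [mul_assoc] using f.2 x (a * s)⟩⟩

lemma coind_smul_apply (s : UniversalEnvelopingAlgebra k L) (f : CoindMod k L p lQ π N)
    (a : UniversalEnvelopingAlgebra k L) : (s • f).1 a = f.1 (a * s) := rfl

/-- The left `U(g)`-module structure on `Coind N`, via right multiplication on `U(g)`. -/
noncomputable instance coindModule :
    Module (UniversalEnvelopingAlgebra k L) (CoindMod k L p lQ π N) where
  one_smul f := Subtype.ext (LinearMap.ext fun a => by
    simp [coind_smul_apply])
  mul_smul s t f := Subtype.ext (LinearMap.ext fun a => by
    simp [coind_smul_apply, mul_assoc])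
  smul_zero s := Subtype.ext (LinearMap.ext fun a => rfl)
  smul_add s f g := Subtype.ext (LinearMap.ext fun a => rfl)
  add_smul s t f := Subtype.ext (LinearMap.ext fun a => by
    simp [coind_smul_apply, mul_add])
  zero_smul f := Subtype.ext (LinearMap.ext fun a => by
    simp [coind_smul_apply])

noncomputable instance coindTower :
    IsScalarTower k (UniversalEnvelopingAlgebra k L) (CoindMod k L p lQ π N) :=
  ⟨fun c s f => Subtype.ext (LinearMap.ext fun a => by
    have h1 : ((c • s) • f).1 a = f.1 (a * (c • s)) := rfl
    have h2 : (c • (s • f)).1 a = c • f.1 (a * s) := rfl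
    rw [h1, h2, Algebra.mul_smul_comm, map_smul])⟩

/-- Evaluation at `1 ∈ U(g)`, i.e. the counit of the coinduction adjunction. -/
noncomputable def coindEv : CoindMod k L p lQ π N →ₗ[k] N where
  toFun f := f.1 1
  map_add' f g := rfl
  map_smul' c f := rfl

namespace InvCoindAux

variable {R : Type*} [CommRing R] {M : Type*} [LieRing M] [LieAlgebra R M]

theorem uea_induction {C : UniversalEnvelopingAlgebra R M → Prop}
    (halg : ∀ r : R, C (algebraMap R (UniversalEnvelopingAlgebra R M) r))
    (hι : ∀ x : M, C (UniversalEnvelopingAlgebra.ι R x))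
    (hmul : ∀ a b, C a → C b → C (a * b))
    (hadd : ∀ a b, C a → C b → C (a + b)) (a : UniversalEnvelopingAlgebra R M) : C a := by
  obtain ⟨t, rfl⟩ := (RingCon.mkₐ_surjective (α := R) (UniversalEnvelopingAlgebra.ringCon R M) :
    Function.Surjective (UniversalEnvelopingAlgebra.mkAlgHom R M)) a
  induction t using TensorAlgebra.induction with
  | algebraMap r => rw [AlgHom.commutes]; exact halg r
  | ι x => exact hι x
  | mul a b ha hb => rw [map_mul]; exact hmul _ _ ha hb
  | add a b ha hb => rw [map_add]; exact hadd _ _ ha hb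

variable (R M) in
/-- The left ideal of `U(M)` spanned by products `y * ι x`. -/
noncomputable def augSpan : Submodule R (UniversalEnvelopingAlgebra R M) :=
  Submodule.span R {z | ∃ (y : UniversalEnvelopingAlgebra R M) (x : M),
    z = y * UniversalEnvelopingAlgebra.ι R x}

theorem mul_mem_augSpan (a : UniversalEnvelopingAlgebra R M) {j : UniversalEnvelopingAlgebra R M}
    (hj : j ∈ augSpan R M) : a * j ∈ augSpan R M := by
  induction hj using Submodule.span_induction with
  | mem z hz =>
    obtain ⟨y, x, rfl⟩ := hz
    exact Submodule.subset_span ⟨a * y, x, (mul_assoc a y _).symm⟩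
  | zero => simp [augSpan]
  | add z w _ _ hz hw => rw [mul_add]; exact Submodule.add_mem _ hz hw
  | smul c z _ hz => rw [mul_smul_comm]; exact Submodule.smul_mem _ _ hz

theorem exists_decomp (a : UniversalEnvelopingAlgebra R M) :
    ∃ c : R, a - algebraMap R (UniversalEnvelopingAlgebra R M) c ∈ augSpan R M := by
  induction a using uea_induction with
  | halg r => exact ⟨r, by simp [augSpan]⟩
  | hι x =>
    refine ⟨0, ?_⟩
    rw [map_zero, sub_zero]
    exact Submodule.subset_span ⟨1, x, (one_mul _).symm⟩
  | hmul a b ha hb =>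
    obtain ⟨c, hc⟩ := ha
    obtain ⟨d, hd⟩ := hb
    refine ⟨c * d, ?_⟩
    have key : a * b - algebraMap R (UniversalEnvelopingAlgebra R M) (c * d) =
        a * (b - algebraMap R _ d) +
          d • (a - algebraMap R (UniversalEnvelopingAlgebra R M) c) := by
      rw [map_mul]
      rw [smul_sub, Algebra.smul_def, Algebra.smul_def]
      rw [mul_sub]
      have h1 : a * algebraMap R (UniversalEnvelopingAlgebra R M) d =
          algebraMap R (UniversalEnvelopingAlgebra R M) d * a := (Algebra.commutes d a).symm
      have h2 : algebraMap R (UniversalEnvelopingAlgebra R M) d *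
          algebraMap R (UniversalEnvelopingAlgebra R M) c =
          algebraMap R (UniversalEnvelopingAlgebra R M) c *
          algebraMap R (UniversalEnvelopingAlgebra R M) d := Algebra.commutes _ _
      rw [h1, h2]
      abel
    rw [key]
    exact Submodule.add_mem _ (mul_mem_augSpan a hd) (Submodule.smul_mem _ _ hc)
  | hadd a b ha hb =>
    obtain ⟨c, hc⟩ := ha
    obtain ⟨d, hd⟩ := hb
    refine ⟨c + d, ?_⟩
    have : a + b - algebraMap R (UniversalEnvelopingAlgebra R M) (c + d) =
        (a - algebraMap R _ c) + (b - algebraMap R (UniversalEnvelopingAlgebra R M) d) := by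
      rw [map_add]; abel
    rw [this]
    exact Submodule.add_mem _ hc hd

theorem counit_vanish {j : UniversalEnvelopingAlgebra R M} (hj : j ∈ augSpan R M) :
    UniversalEnvelopingAlgebra.lift R (0 : M →ₗ⁅R⁆ R) j = 0 := by
  induction hj using Submodule.span_induction with
  | mem z hz =>
    obtain ⟨y, x, rfl⟩ := hz
    rw [map_mul, UniversalEnvelopingAlgebra.lift_ι_apply]
    simp
  | zero => simp
  | add z w _ _ hz hw => rw [map_add, hz, hw, add_zero]
  | smul a z _ hz => rw [map_smul, hz, smul_zero]

end InvCoindAux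

/-- The bilinear map `U(p) ⊗ U(u⁺) → N`, `x ⊗ y ↦ ε(y) • ψ(x) • n`. -/
noncomputable def coindBilAux (up : LieSubalgebra k L) (n : N) :
    UniversalEnvelopingAlgebra k p ⊗[k] UniversalEnvelopingAlgebra k up →ₗ[k] N :=
  TensorProduct.lift
    { toFun := fun x =>
        { toFun := fun y =>
            (UniversalEnvelopingAlgebra.lift k (0 : up →ₗ⁅k⁆ k) y) • (projUEA k L p lQ π x • n)
          map_add' := fun y z => by simp [add_smul]
          map_smul' := fun c y => by simp [mul_smul] }
      map_add' := fun x z => by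
        ext y
        simp [map_add, add_smul, smul_add]
      map_smul' := fun c x => by
        ext y
        simp only [map_smul, LinearMap.coe_mk, AddHom.coe_mk, RingHom.id_apply,
          LinearMap.smul_apply]
        rw [smul_assoc, smul_comm] }

lemma coindBilAux_tmul (up : LieSubalgebra k L) (n : N)
    (x : UniversalEnvelopingAlgebra k p) (y : UniversalEnvelopingAlgebra k up) :
    coindBilAux k L p lQ π N up n (x ⊗ₜ[k] y) =
      (UniversalEnvelopingAlgebra.lift k (0 : up →ₗ⁅k⁆ k) y) • (projUEA k L p lQ π x • n) := rfl

set_option maxHeartbeats 2000000 in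
/-- in the parabolic situation (with `g = u⁺ ⊕ p⁻` and the PBW factorization
`U(g) ≅ U(p⁻) ⊗ U(u⁺)`), evaluation at `1 ∈ U(g)` is a bijection from the `u⁺`-invariants of
the coinduced module `Hom_{U(p⁻)}(U(g), N)` onto `N`, and it is `l`-equivariant; i.e.
`Res^! ∘ Ind_* = id`. -/
theorem invariants_of_coinduction
    (hπ : Function.Surjective π)
    (up : LieSubalgebra k L)
    (hcompl : IsCompl up.toSubmodule p.toSubmodule)
    (hPBW : Function.Bijective
      (TensorProduct.lift
        ((LinearMap.mul k (UniversalEnvelopingAlgebra k L)).compl₁₂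
          (subUEA k L p).toLinearMap (subUEA k L up).toLinearMap))) :
    Function.Bijective
      (fun F : {F : CoindMod k L p lQ π N //
          ∀ x : up, (UniversalEnvelopingAlgebra.ι k (x : L) :
            UniversalEnvelopingAlgebra k L) • F = 0} =>
        coindEv k L p lQ π N F.1) ∧
    ∀ (x : p) (F : CoindMod k L p lQ π N),
      coindEv k L p lQ π N
          ((UniversalEnvelopingAlgebra.ι k (x : L) : UniversalEnvelopingAlgebra k L) • F) =
        (UniversalEnvelopingAlgebra.ι k (π x) : UniversalEnvelopingAlgebra k lQ) •
          coindEv k L p lQ π N F := by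
  classical
  set μ := (TensorProduct.lift
        ((LinearMap.mul k (UniversalEnvelopingAlgebra k L)).compl₁₂
          (subUEA k L p).toLinearMap (subUEA k L up).toLinearMap)) with hμdef
  have hμ : ∀ (x : UniversalEnvelopingAlgebra k p) (y : UniversalEnvelopingAlgebra k up),
      μ (x ⊗ₜ[k] y) = subUEA k L p x * subUEA k L up y := fun x y => by
    simp [hμdef]
  have hφu : ∀ x : up, subUEA k L up (UniversalEnvelopingAlgebra.ι k x) =
      UniversalEnvelopingAlgebra.ι k (x : L) := fun x => by
    simp [subUEA, UniversalEnvelopingAlgebra.lift_ι_apply]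
  have hψι : ∀ x : p, projUEA k L p lQ π (UniversalEnvelopingAlgebra.ι k x) =
      UniversalEnvelopingAlgebra.ι k (π x) := fun x => by
    simp [projUEA, UniversalEnvelopingAlgebra.lift_ι_apply]
  have hφpι : ∀ x : p, subUEA k L p (UniversalEnvelopingAlgebra.ι k x) =
      UniversalEnvelopingAlgebra.ι k (x : L) := fun x => by
    simp [subUEA, UniversalEnvelopingAlgebra.lift_ι_apply]
  -- membership condition rephrased with `subUEA`
  have hmemF : ∀ (F : CoindMod k L p lQ π N) (x : UniversalEnvelopingAlgebra k p)
      (a : UniversalEnvelopingAlgebra k L),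
      F.1 (subUEA k L p x * a) = projUEA k L p lQ π x • F.1 a := fun F => F.2
  -- invariant elements kill the image of the augmentation ideal of U(u⁺)
  have hvanish : ∀ (F : CoindMod k L p lQ π N),
      (∀ x : up, (UniversalEnvelopingAlgebra.ι k (x : L) :
        UniversalEnvelopingAlgebra k L) • F = 0) →
      ∀ j ∈ InvCoindAux.augSpan k up, F.1 (subUEA k L up j) = 0 := by
    intro F hF j hj
    induction hj using Submodule.span_induction with
    | mem z hz =>
      obtain ⟨y, x, rfl⟩ := hz
      have h0 := congrArg (fun G : CoindMod k L p lQ π N => G.1 (subUEA k L up y)) (hF x)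
      simp only [coind_smul_apply] at h0
      rw [map_mul, hφu x]
      simpa using h0
    | zero => simp
    | add z w _ _ hz hw => rw [map_add, map_add, hz, hw, add_zero]
    | smul c z _ hz => rw [map_smul, map_smul, hz, smul_zero]
  -- an invariant element is determined by its value at 1
  have hval : ∀ (F : CoindMod k L p lQ π N),
      (∀ x : up, (UniversalEnvelopingAlgebra.ι k (x : L) :
        UniversalEnvelopingAlgebra k L) • F = 0) →
      ∀ y : UniversalEnvelopingAlgebra k up,
        F.1 (subUEA k L up y) =
          (UniversalEnvelopingAlgebra.lift k (0 : up →ₗ⁅k⁆ k) y) • F.1 1 := by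
    intro F hF y
    obtain ⟨c, hc⟩ := InvCoindAux.exists_decomp y
    have hy : y = (y - algebraMap k _ c) + algebraMap k _ c := by abel
    have hval0 : F.1 (subUEA k L up (y - algebraMap k _ c)) = 0 := hvanish F hF _ hc
    have hε : UniversalEnvelopingAlgebra.lift k (0 : up →ₗ⁅k⁆ k) y = c := by
      have h2 := InvCoindAux.counit_vanish hc
      rw [map_sub, AlgHom.commutes] at h2
      have := sub_eq_zero.mp h2
      simpa using this
    conv_lhs => rw [hy]
    rw [map_add, map_add, hval0, zero_add, AlgHom.commutes,
      Algebra.algebraMap_eq_smul_one, map_smul, hε]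
  constructor
  · constructor
    · -- injectivity
      rintro ⟨F, hF⟩ ⟨G, hG⟩ h
      simp only [coindEv, LinearMap.coe_mk, AddHom.coe_mk] at h
      ext a
      obtain ⟨t, rfl⟩ := hPBW.surjective a
      induction t with
      | zero => simp
      | tmul x y =>
        rw [hμ, hmemF F, hmemF G, hval F hF, hval G hG, h]
      | add t s ht hs => rw [map_add, map_add, map_add, ht, hs]
    · -- surjectivity
      intro n
      set e := LinearEquiv.ofBijective μ hPBW with hedef
      have hesymm : ∀ t, e.symm (μ t) = t := fun t => e.symm_apply_apply t
      set Glin : UniversalEnvelopingAlgebra k L →ₗ[k] N :=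
        (coindBilAux k L p lQ π N up n) ∘ₗ (e.symm : UniversalEnvelopingAlgebra k L →ₗ[k] _)
        with hGdef
      have hGμ : ∀ t, Glin (μ t) = coindBilAux k L p lQ π N up n t := fun t => by
        simp [hGdef, hesymm]
      have hGmem : Glin ∈ coindCarrier k L p lQ π N := by
        intro x a
        obtain ⟨t, rfl⟩ := hPBW.surjective a
        show Glin (subUEA k L p x * μ t) = projUEA k L p lQ π x • Glin (μ t)
        induction t with
        | zero => simp
        | tmul x' y =>
          rw [hμ, ← mul_assoc, ← map_mul,
            show subUEA k L p (x * x') * subUEA k L up y = μ ((x * x') ⊗ₜ[k] y) from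
              (hμ _ _).symm,
            show subUEA k L p x' * subUEA k L up y = μ (x' ⊗ₜ[k] y) from (hμ _ _).symm,
            hGμ, hGμ, coindBilAux_tmul, coindBilAux_tmul, map_mul, mul_smul]
          rw [smul_comm]
        | add t s ht hs =>
          simp only [map_add, mul_add, ht, hs, smul_add]
      set Fel : CoindMod k L p lQ π N := ⟨Glin, hGmem⟩ with hFel
      have hinv : ∀ x : up, (UniversalEnvelopingAlgebra.ι k (x : L) :
          UniversalEnvelopingAlgebra k L) • Fel = 0 := by
        intro x
        apply Subtype.ext
        apply LinearMap.ext
        intro a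
        rw [coind_smul_apply]
        obtain ⟨t, rfl⟩ := hPBW.surjective a
        show Glin (μ t * UniversalEnvelopingAlgebra.ι k (x : L)) = _
        induction t with
        | zero => simp
        | tmul x' y =>
          rw [hμ, mul_assoc, ← hφu x, ← map_mul]
          rw [show subUEA k L p x' * subUEA k L up (y * UniversalEnvelopingAlgebra.ι k x) =
            μ (x' ⊗ₜ[k] (y * UniversalEnvelopingAlgebra.ι k x)) from (hμ _ _).symm]
          rw [hGμ, coindBilAux_tmul, map_mul, UniversalEnvelopingAlgebra.lift_ι_apply]
          simp
        | add t s ht hs =>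
          rw [map_add, add_mul, map_add, ht, hs]
          simp
      refine ⟨⟨Fel, hinv⟩, ?_⟩
      show Glin 1 = n
      rw [show (1 : UniversalEnvelopingAlgebra k L) = μ ((1 : UniversalEnvelopingAlgebra k p)
        ⊗ₜ[k] (1 : UniversalEnvelopingAlgebra k up)) by rw [hμ]; simp]
      rw [hGμ, coindBilAux_tmul]
      simp
  · -- equivariance
    intro x F
    show F.1 (1 * UniversalEnvelopingAlgebra.ι k (x : L)) = _
    rw [one_mul, ← mul_one (UniversalEnvelopingAlgebra.ι k (x : L)), ← hφpι x,
      hmemF F (UniversalEnvelopingAlgebra.ι k x) 1, hψι x]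
    rfl

end
end
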